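/- arXiv:1602.00855 — 5 statements merged into one kernel-verified Lean document; each statement's English description precedes it below -/
import Mathlib

section
/- Let r > 0, T > 0, α ∈ [1, ∞) and n ∈ ℕ*. The closure P̄_T^α(ℝ₊, μ_r; ℝⁿ) of the space of continuous T-periodic functions in L^α(ℝ₊, μ_r; ℝⁿ) is exactly the set of all f ∈ L^α(ℝ₊, μ_r; ℝⁿ) such that f(t + T) = f(t) for Lebesgue-almost every t ∈ ℝ₊. -/
/-!
On the `k`-th period `[kT, (k+1)T)` the weight `e^{-rt}` lies between `e^{-r(k+1)T}` and
`e^{-rkT}`. Summing the geometric series, the push-forward of `μ_r` to the circle `ℝ/Tℤ` is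
at most `(1 - e^{-rT})⁻¹` times Haar measure, while on the first period it dominates
`e^{-rT}` times Haar measure. Hence pulling back along `ℝ → ℝ/Tℤ` maps `L^p` of the circle
into `L^p(μ_r)` with equivalent norms. An a.e. `T`-periodic function agrees a.e. on `ℝ₊` with
the pull-back of its restriction to `[0, T)`, so density of continuous functions in `L^p` of
the circle gives one inclusion. The other holds because a.e. periodicity survives `L^p`
limits, through a.e. convergent subsequences.
-/

open MeasureTheory Real Set

/-- The weighted measure `μ_r` on `ℝ₊`: density `t ↦ e^{-rt}` w.r.t. Lebesgue measure,
restricted to `[0, ∞)`. -/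
noncomputable def muW (r : ℝ) : Measure ℝ :=
  (volume.withDensity fun t => ENNReal.ofReal (Real.exp (-r * t))).restrict (Set.Ici 0)

open Filter ENNReal Measure

theorem MeasureTheory.Lp.isClosed_setOf_ae_comp_eq {α E : Type*} [MeasurableSpace α]
    {μ : Measure α} [NormedAddCommGroup E] {p : ℝ≥0∞} [Fact (1 ≤ p)] {φ : α → α}
    (hφ : QuasiMeasurePreserving φ μ μ) :
    IsClosed {F : Lp E p μ | ∀ᵐ x ∂μ, F (φ x) = F x} := by
  refine IsSeqClosed.isClosed fun F G hF hlim => ?_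
  obtain ⟨ns, -, hns⟩ := (tendstoInMeasure_of_tendsto_eLpNorm (zero_lt_one.trans_le Fact.out).ne'
    (fun _ => Lp.aestronglyMeasurable _) (Lp.aestronglyMeasurable _)
    ((Lp.tendsto_Lp_iff_tendsto_eLpNorm' F G).1 hlim)).exists_seq_tendsto_ae
  filter_upwards [hns, hφ.ae hns, ae_all_iff.2 fun i => hF (ns i)] with x hx hφx hFx
  exact tendsto_nhds_unique (by simpa only [hFx] using hφx) hx

section Translation

variable {T : ℝ}

theorem quasiMeasurePreserving_add_const_restrict_Ici {a c : ℝ} (hc : 0 ≤ c) :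
    QuasiMeasurePreserving (· + c) (volume.restrict (Ici a)) (volume.restrict (Ici a)) := by
  have hmp := (measurePreserving_add_right volume c).restrict_preimage (measurableSet_Ici (a := a))
  rw [preimage_add_const_Ici] at hmp
  exact hmp.quasiMeasurePreserving.mono_left
    (absolutelyContinuous_of_le (restrict_mono (Ici_subset_Ici.2 (by linarith)) le_rfl))

theorem exists_toIcoMod_add_nsmul_eq (hT : 0 < T) {t : ℝ} (ht : 0 ≤ t) :
    ∃ k : ℕ, toIcoMod hT 0 t + k • T = t := by
  have hdiv : 0 ≤ toIcoDiv hT 0 t := by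
    rw [toIcoDiv_eq_floor, sub_zero]
    exact Int.floor_nonneg.2 (div_nonneg ht hT.le)
  refine ⟨(toIcoDiv hT 0 t).toNat, ?_⟩
  rw [← natCast_zsmul, Int.toNat_of_nonneg hdiv, toIcoMod_add_toIcoDiv_zsmul]

theorem quasiMeasurePreserving_toIcoMod (hT : 0 < T) :
    QuasiMeasurePreserving (toIcoMod hT 0) volume (volume.restrict (Ico 0 T)) := by
  have hmeas : Measurable (toIcoMod hT 0) := by
    rw [funext (toIcoMod_eq_fract_mul hT)]
    exact ((measurable_id.div_const T).fract).mul_const T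
  refine ⟨hmeas, AbsolutelyContinuous.mk fun s hs hs0 => ?_⟩
  rw [restrict_apply hs] at hs0
  rw [map_apply hmeas hs]
  refine measure_mono_null (fun t ht => mem_iUnion.2 ⟨toIcoDiv hT 0 t, ?_⟩)
    (measure_iUnion_null fun n : ℤ => (measure_preimage_add_right volume (-(n • T)) _).trans hs0)
  rw [mem_preimage, ← sub_eq_add_neg, self_sub_toIcoDiv_zsmul]
  exact ⟨ht, by simpa using toIcoMod_mem_Ico hT 0 t⟩

theorem ae_eq_toIcoMod_of_ae_periodic {β : Type*} (hT : 0 < T) {f : ℝ → β}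
    (hf : ∀ᵐ t ∂volume.restrict (Ici 0), f (t + T) = f t) :
    ∀ᵐ t ∂volume.restrict (Ici 0), f t = f (toIcoMod hT 0 t) := by
  have hnsmul : ∀ k : ℕ, ∀ᵐ t ∂volume.restrict (Ici 0), f (t + k • T) = f t := by
    intro k
    induction k with
    | zero => simp
    | succ k ih =>
      filter_upwards [(quasiMeasurePreserving_add_const_restrict_Ici (nsmul_nonneg hT.le k)).ae hf,
        ih] with t hshift ht
      rw [succ_nsmul, ← add_assoc, hshift, ht]
  have hIco : ∀ᵐ s ∂volume.restrict (Ico 0 T), ∀ k : ℕ, f (s + k • T) = f s :=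
    ae_restrict_of_ae_restrict_of_subset Ico_subset_Ici_self (ae_all_iff.2 hnsmul)
  filter_upwards [((quasiMeasurePreserving_toIcoMod hT).mono_left
    (absolutelyContinuous_of_le restrict_le_self)).ae hIco, ae_restrict_mem measurableSet_Ici]
    with t ht ht0
  obtain ⟨k, hk⟩ := exists_toIcoMod_add_nsmul_eq hT ht0
  conv_lhs => rw [← hk]
  exact ht k

end Translation

section WeightedMeasure

variable {r T : ℝ}

theorem muW_eq_withDensity (r : ℝ) :
    muW r = (volume.restrict (Ici 0)).withDensity fun t => ENNReal.ofReal (exp (-r * t)) := by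
  rw [muW, restrict_withDensity measurableSet_Ici]

theorem ae_muW (r : ℝ) : ae (muW r) = ae (volume.restrict (Ici 0)) := by
  rw [muW_eq_withDensity]
  refine le_antisymm (ae_le_iff_absolutelyContinuous.2 (withDensity_absolutelyContinuous _ _))
    (ae_le_iff_absolutelyContinuous.2 (withDensity_absolutelyContinuous'
      (by fun_prop) (ae_of_all _ fun t => by positivity)))

theorem quasiMeasurePreserving_add_const_muW {c : ℝ} (hc : 0 ≤ c) :
    QuasiMeasurePreserving (· + c) (muW r) (muW r) :=
  (quasiMeasurePreserving_add_const_restrict_Ici hc).mono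
    (ae_le_iff_absolutelyContinuous.1 (ae_muW r).le)
    (ae_le_iff_absolutelyContinuous.1 (ae_muW r).ge)

theorem ofReal_exp_neg_mul_le_pow (hr : 0 ≤ r) {k : ℕ} {t : ℝ} (ht : k • T ≤ t) :
    ENNReal.ofReal (exp (-r * t)) ≤ ENNReal.ofReal (exp (-(r * T))) ^ k := by
  rw [← ENNReal.ofReal_pow (exp_nonneg _), ← exp_nat_mul]
  refine ENNReal.ofReal_le_ofReal (exp_le_exp.2 ?_)
  rw [nsmul_eq_mul] at ht
  nlinarith

theorem inv_one_sub_ofReal_exp_neg_ne_top (hr : 0 < r) (hT : 0 < T) :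
    (1 - ENNReal.ofReal (exp (-(r * T))))⁻¹ ≠ ∞ := by
  refine inv_ne_top.2 (tsub_pos_of_lt ?_).ne'
  rw [ENNReal.ofReal_lt_one, exp_lt_one_iff, neg_lt_zero]
  exact mul_pos hr hT

end WeightedMeasure

section Circle

variable {r T : ℝ} [hT : Fact (0 < T)]

theorem lintegral_comp_coe_muW_le (hr : 0 ≤ r) {ψ : AddCircle T → ℝ≥0∞} (hψ : Measurable ψ) :
    ∫⁻ t, ψ t ∂muW r ≤ (1 - ENNReal.ofReal (exp (-(r * T))))⁻¹ * ∫⁻ x, ψ x := by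
  have hψ' : Measurable fun t : ℝ => ψ t := hψ.comp AddCircle.measurable_mk'
  have hcover : Ici (0 : ℝ) ⊆ ⋃ k : ℕ, Ico (k • T) (k • T + T) := fun t ht => by
    obtain ⟨k, hk⟩ := exists_toIcoMod_add_nsmul_eq hT.out ht
    have hmem := toIcoMod_mem_Ico hT.out 0 t
    rw [zero_add] at hmem
    exact mem_iUnion.2 ⟨k, by constructor <;> linarith [hmem.1, hmem.2]⟩
  set c := ENNReal.ofReal (exp (-(r * T)))
  have hpiece (k : ℕ) : ∫⁻ t in Ico (k • T) (k • T + T), ENNReal.ofReal (exp (-r * t)) * ψ t ≤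
      c ^ k * ∫⁻ x, ψ x :=
    calc ∫⁻ t in Ico (k • T) (k • T + T), ENNReal.ofReal (exp (-r * t)) * ψ t
        ≤ ∫⁻ t in Ico (k • T) (k • T + T), c ^ k * ψ t :=
          setLIntegral_mono' measurableSet_Ico fun t ht =>
            mul_le_mul_left (ofReal_exp_neg_mul_le_pow hr ht.1) _
      _ = c ^ k * ∫⁻ t in Ioc (k • T) (k • T + T), ψ t := by
          rw [lintegral_const_mul _ hψ', restrict_congr_set Ico_ae_eq_Ioc]
      _ = c ^ k * ∫⁻ x, ψ x := by rw [AddCircle.lintegral_preimage]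
  rw [muW_eq_withDensity, lintegral_withDensity_eq_lintegral_mul _ (by fun_prop) hψ']
  calc ∫⁻ t in Ici 0, ENNReal.ofReal (exp (-r * t)) * ψ t
      ≤ ∫⁻ t in ⋃ k : ℕ, Ico (k • T) (k • T + T), ENNReal.ofReal (exp (-r * t)) * ψ t :=
        lintegral_mono_set hcover
    _ ≤ ∑' k : ℕ, c ^ k * ∫⁻ x, ψ x :=
        (lintegral_iUnion_le _ _).trans (ENNReal.tsum_le_tsum hpiece)
    _ = (1 - c)⁻¹ * ∫⁻ x, ψ x := by rw [ENNReal.tsum_mul_right, ENNReal.tsum_geometric]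

theorem map_coe_muW_le (hr : 0 ≤ r) :
    (muW r).map ((↑) : ℝ → AddCircle T) ≤ (1 - ENNReal.ofReal (exp (-(r * T))))⁻¹ • volume := by
  refine Measure.le_iff.2 fun s hs => ?_
  rw [map_apply AddCircle.measurable_mk' hs, Measure.smul_apply, smul_eq_mul,
    ← lintegral_indicator_one hs, ← lintegral_indicator_one (AddCircle.measurable_mk' hs)]
  exact lintegral_comp_coe_muW_le hr (measurable_one.indicator hs)

theorem volume_le_smul_map_coe_muW (hr : 0 ≤ r) :
    (volume : Measure (AddCircle T)) ≤ ENNReal.ofReal (exp (r * T)) • (muW r).map (↑) := by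
  rw [← (AddCircle.measurePreserving_mk T 0).map_eq, ← Measure.map_smul, zero_add]
  refine map_mono (Measure.le_iff.2 fun s hs => ?_) AddCircle.measurable_mk'
  rw [restrict_apply hs, Measure.smul_apply, smul_eq_mul, muW_eq_withDensity,
    withDensity_apply _ hs, restrict_restrict hs, ← lintegral_const_mul' _ _ ofReal_ne_top,
    ← setLIntegral_one]
  calc ∫⁻ _ in s ∩ Ioc 0 T, 1
      ≤ ∫⁻ t in s ∩ Ioc 0 T, ENNReal.ofReal (exp (r * T)) * ENNReal.ofReal (exp (-r * t)) := by
        refine setLIntegral_mono' (hs.inter measurableSet_Ioc) fun t ht => ?_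
        rw [← ENNReal.ofReal_mul (exp_nonneg _), ← exp_add, ← ENNReal.ofReal_one]
        exact ENNReal.ofReal_le_ofReal (one_le_exp (by nlinarith [ht.2.2]))
    _ ≤ _ := lintegral_mono_set (inter_subset_inter_right _ fun t ht => le_of_lt ht.1)

theorem exists_stronglyMeasurable_ae_eq_comp_coe_of_ae_periodic {β : Type*} [TopologicalSpace β]
    {f : ℝ → β} (hf : AEStronglyMeasurable f (volume.restrict (Ici 0)))
    (hper : ∀ᵐ t ∂volume.restrict (Ici 0), f (t + T) = f t) :
    ∃ g : AddCircle T → β, StronglyMeasurable g ∧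
      f =ᵐ[volume.restrict (Ici 0)] g ∘ (↑) := by
  have hper_mk : ∀ᵐ t ∂volume.restrict (Ici 0), hf.mk f (t + T) = hf.mk f t := by
    filter_upwards [hper, (quasiMeasurePreserving_add_const_restrict_Ici hT.out.le).ae hf.ae_eq_mk,
      hf.ae_eq_mk] with t hft hshift hmk
    rw [← hshift, hft, hmk]
  refine ⟨AddCircle.liftIco T 0 (hf.mk f), hf.stronglyMeasurable_mk.comp_measurable
    (measurable_subtype_coe.comp (AddCircle.measurableEquivIco T 0).measurable), ?_⟩
  filter_upwards [hf.ae_eq_mk, ae_eq_toIcoMod_of_ae_periodic hT.out hper_mk] with t hmk hfold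
  rw [hmk, hfold]
  simp [AddCircle.liftIco, AddCircle.equivIco, QuotientAddGroup.equivIcoMod_coe]

end Circle

section Lp

variable {r T : ℝ} [Fact (0 < T)] {E : Type*} [NormedAddCommGroup E] {p : ℝ≥0∞}

theorem quasiMeasurePreserving_coe_muW (hr : 0 ≤ r) :
    QuasiMeasurePreserving ((↑) : ℝ → AddCircle T) (muW r) volume :=
  ⟨AddCircle.measurable_mk', absolutelyContinuous_of_le_smul (map_coe_muW_le hr)⟩

theorem eLpNorm_comp_coe_muW_le (hr : 0 ≤ r) (hp : p ≠ ∞) {g : AddCircle T → E}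
    (hg : AEStronglyMeasurable g volume) :
    eLpNorm (g ∘ (↑)) p (muW r) ≤
      (1 - ENNReal.ofReal (exp (-(r * T))))⁻¹ ^ (1 / p).toReal * eLpNorm g p volume := by
  rw [← eLpNorm_map_measure (hg.mono_ac (quasiMeasurePreserving_coe_muW hr).absolutelyContinuous)
    AddCircle.measurable_mk'.aemeasurable, ← smul_eq_mul, ← eLpNorm_smul_measure_of_ne_top hp]
  exact eLpNorm_mono_measure _ (map_coe_muW_le hr)

theorem eLpNorm_le_eLpNorm_comp_coe_muW (hr : 0 ≤ r) (hp : p ≠ ∞) {g : AddCircle T → E}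
    (hg : AEStronglyMeasurable g volume) :
    eLpNorm g p volume ≤
      ENNReal.ofReal (exp (r * T)) ^ (1 / p).toReal * eLpNorm (g ∘ (↑)) p (muW r) := by
  rw [← eLpNorm_map_measure (hg.mono_ac (quasiMeasurePreserving_coe_muW hr).absolutelyContinuous)
    AddCircle.measurable_mk'.aemeasurable, ← smul_eq_mul, ← eLpNorm_smul_measure_of_ne_top hp]
  exact eLpNorm_mono_measure _ (volume_le_smul_map_coe_muW hr)

theorem MeasureTheory.MemLp.comp_coe_muW (hr : 0 < r) (hp : p ≠ ∞) {g : AddCircle T → E}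
    (hg : MemLp g p volume) : MemLp (g ∘ (↑)) p (muW r) :=
  ⟨hg.1.comp_quasiMeasurePreserving (quasiMeasurePreserving_coe_muW hr.le),
    (eLpNorm_comp_coe_muW_le hr.le hp hg.1).trans_lt <| mul_lt_top
      (rpow_lt_top_of_nonneg toReal_nonneg (inv_one_sub_ofReal_exp_neg_ne_top hr Fact.out)) hg.2⟩

theorem memLp_of_memLp_comp_coe_muW (hr : 0 ≤ r) (hp : p ≠ ∞) {g : AddCircle T → E}
    (hg : AEStronglyMeasurable g volume) (hgr : MemLp (g ∘ (↑)) p (muW r)) :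
    MemLp g p volume :=
  ⟨hg, (eLpNorm_le_eLpNorm_comp_coe_muW hr hp hg).trans_lt
    (mul_lt_top (rpow_lt_top_of_nonneg toReal_nonneg ofReal_ne_top) hgr.2)⟩

theorem mem_closure_setOf_continuous_periodic [NormedSpace ℝ E] [Fact (1 ≤ p)] (hr : 0 < r)
    (hp : p ≠ ∞) {F : Lp E p (muW r)} {f : AddCircle T → E} (hf : MemLp f p volume)
    (hF : F =ᵐ[muW r] f ∘ (↑)) :
    F ∈ closure {G : Lp E p (muW r) |
      ∃ g : ℝ → E, Continuous g ∧ Function.Periodic g T ∧ G =ᵐ[muW r] g} := by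
  set K := (1 - ENNReal.ofReal (exp (-(r * T))))⁻¹ ^ (1 / p).toReal
  have hK : K ≠ ∞ :=
    rpow_ne_top_of_nonneg toReal_nonneg (inv_one_sub_ofReal_exp_neg_ne_top hr Fact.out)
  refine EMetric.mem_closure_iff.2 fun ε hε => ?_
  obtain ⟨δ, hδ, hδK⟩ := ENNReal.exists_nnreal_pos_mul_lt hK hε.ne'
  obtain ⟨g, hfg, hg⟩ := hf.exists_boundedContinuous_eLpNorm_sub_le hp (coe_ne_zero.2 hδ.ne')
  have hgr := hg.comp_coe_muW hr hp
  refine ⟨hgr.toLp _, ⟨_, g.continuous.comp (AddCircle.continuous_mk' T),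
    fun t => congrArg g (AddCircle.coe_add_period T t), hgr.coeFn_toLp⟩, ?_⟩
  rw [Lp.edist_def, eLpNorm_congr_ae (hF.sub hgr.coeFn_toLp)]
  calc eLpNorm ((f - ⇑g) ∘ (↑)) p (muW r)
      ≤ K * eLpNorm (f - ⇑g) p volume :=
        eLpNorm_comp_coe_muW_le hr.le hp (hf.1.sub g.continuous.aestronglyMeasurable)
    _ ≤ K * δ := mul_le_mul_right hfg K
    _ < ε := by rwa [mul_comm]

end Lp

theorem closure_periodic_eq_ae_periodic_general
    (r T α : ℝ) (hr : 0 < r) (hT : 0 < T) (n : ℕ)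
    [Fact (1 ≤ ENNReal.ofReal α)] :
    closure {F : Lp (EuclideanSpace ℝ (Fin n)) (ENNReal.ofReal α) (muW r) |
        ∃ g : ℝ → EuclideanSpace ℝ (Fin n), Continuous g ∧ Function.Periodic g T ∧
          (F : ℝ → EuclideanSpace ℝ (Fin n)) =ᵐ[muW r] g} =
      {F : Lp (EuclideanSpace ℝ (Fin n)) (ENNReal.ofReal α) (muW r) |
        ∀ᵐ t ∂(volume.restrict (Set.Ici (0:ℝ))),
          (F : ℝ → EuclideanSpace ℝ (Fin n)) (t + T) =
            (F : ℝ → EuclideanSpace ℝ (Fin n)) t} := by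
  have : Fact (0 < T) := ⟨hT⟩
  have hshift := quasiMeasurePreserving_add_const_muW (r := r) hT.le
  refine subset_antisymm (closure_minimal ?_ ?_) fun F hF => ?_
  · rintro F ⟨g, -, hg, hFg⟩
    rw [← ae_muW]
    filter_upwards [hFg, hshift.ae hFg] with t ht hTt
    rw [hTt, hg, ht]
  · rw [← ae_muW]
    exact Lp.isClosed_setOf_ae_comp_eq hshift
  · obtain ⟨f, hfm, hFf⟩ := exists_stronglyMeasurable_ae_eq_comp_coe_of_ae_periodic
      ((Lp.aestronglyMeasurable F).mono_ac (ae_le_iff_absolutelyContinuous.1 (ae_muW r).ge)) hF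
    rw [← ae_muW] at hFf
    exact mem_closure_setOf_continuous_periodic hr ofReal_ne_top
      (memLp_of_memLp_comp_coe_muW hr.le ofReal_ne_top hfm.aestronglyMeasurable
        ((Lp.memLp F).ae_eq hFf)) hFf

/-- The closure of the space of continuous `T`-periodic functions in
`L^α(ℝ₊, μ_r; ℝⁿ)` is exactly the set of `f ∈ L^α` with `f(t+T) = f(t)` for
Lebesgue-a.e. `t ∈ ℝ₊`. -/
theorem closure_periodic_eq_ae_periodic
    (r T α : ℝ) (hr : 0 < r) (hT : 0 < T) (hα : 1 ≤ α) (n : ℕ) (hn : 0 < n)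
    [Fact (1 ≤ ENNReal.ofReal α)] :
    closure {F : Lp (EuclideanSpace ℝ (Fin n)) (ENNReal.ofReal α) (muW r) |
        ∃ g : ℝ → EuclideanSpace ℝ (Fin n), Continuous g ∧ Function.Periodic g T ∧
          (F : ℝ → EuclideanSpace ℝ (Fin n)) =ᵐ[muW r] g} =
      {F : Lp (EuclideanSpace ℝ (Fin n)) (ENNReal.ofReal α) (muW r) |
        ∀ᵐ t ∂(volume.restrict (Set.Ici (0:ℝ))),
          (F : ℝ → EuclideanSpace ℝ (Fin n)) (t + T) =
            (F : ℝ → EuclideanSpace ℝ (Fin n)) t} :=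
  closure_periodic_eq_ae_periodic_general r T α hr hT n
end

section
/- Let r > 0, T > 0, α ∈ [1, ∞) and n ∈ ℕ*. The T-periodic extension operator E_T is a continuous linear map from L^α([0,T), μ_r; ℝⁿ) to P̄_T^α(ℝ₊, μ_r; ℝⁿ), and for every f ∈ L^α([0,T), μ_r; ℝⁿ) one has the exact norm identity ‖E_T(f)‖_{L^α(ℝ₊, μ_r; ℝⁿ)} = (1/(1 − e^{−rT}))^{1/α} ‖f‖_{L^α([0,T), μ_r; ℝⁿ)}. -/
open MeasureTheory Real Set

/-- The `T`-periodic extension operator: `E_T(f)(t) = f(t - kT)` for `t ∈ [kT, (k+1)T)`. -/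
noncomputable def perExt {G : Type*} (T : ℝ) (f : ℝ → G) : ℝ → G :=
  fun t => f (t - ⌊t / T⌋ * T)

open scoped ENNReal

/-! Cut `ℝ₊` into the periods `[kT, (k+1)T)`. Translating the `k`-th one back to `[0, T)`
multiplies the weight `e^{-rt}` by `e^{-rkT}`, so summing the geometric series shows that
`t ↦ t mod T` pushes `μ_r` forward to `(1 - e^{-rT})⁻¹ • μ_r|[0,T)`. Since `E_T f = f ∘ (· mod T)`,
integrability, the norm identity and measurability of `E_T f` all follow from this identity of
measures. -/

section PeriodicExtension

variable {r T : ℝ}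

theorem measurable_toIcoMod (hT : 0 < T) (a : ℝ) : Measurable (toIcoMod hT a) := by
  have : toIcoMod hT a = fun t => t - ⌊(t - a) / T⌋ * T := by
    funext t
    rw [← self_sub_toIcoDiv_zsmul, toIcoDiv_eq_floor, zsmul_eq_mul]
  rw [this]
  fun_prop

theorem perExt_eq_comp_toIcoMod {G : Type*} (hT : 0 < T) (f : ℝ → G) :
    perExt T f = f ∘ toIcoMod hT 0 := by
  funext t
  rw [Function.comp_apply, ← self_sub_toIcoDiv_zsmul, toIcoDiv_eq_floor, zsmul_eq_mul, sub_zero]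
  rfl

theorem iUnion_Ico_natCast_mul (hT : 0 < T) :
    ⋃ k : ℕ, Ico (k * T) ((k + 1 : ℕ) * T) = Ici 0 := by
  ext t
  simp only [mem_iUnion, mem_Ico, mem_Ici]
  constructor
  · rintro ⟨k, hk, -⟩
    exact (by positivity : (0 : ℝ) ≤ k * T).trans hk
  · intro ht
    refine ⟨⌊t / T⌋₊, ?_, ?_⟩
    · rw [← le_div_iff₀ hT]
      exact Nat.floor_le (div_nonneg ht hT.le)
    · rw [← div_lt_iff₀ hT, Nat.cast_succ]
      exact Nat.lt_floor_add_one _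

theorem lintegral_Ici_eq_tsum_Ico (hT : 0 < T) (F : ℝ → ℝ≥0∞) :
    ∫⁻ t in Ici 0, F t = ∑' k : ℕ, ∫⁻ s in Ico 0 T, F (s + k * T) := by
  have hmono : Monotone fun k : ℕ => (k : ℝ) * T := fun _ _ hij =>
    mul_le_mul_of_nonneg_right (by exact_mod_cast hij) hT.le
  rw [← iUnion_Ico_natCast_mul hT, lintegral_iUnion (fun _ => measurableSet_Ico)
    (by simpa using hmono.pairwise_disjoint_on_Ico_succ)]
  congr 1
  funext k
  rw [← (measurePreserving_add_right volume ((k : ℝ) * T)).setLIntegral_comp_preimage_emb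
    (measurableEmbedding_addRight _), preimage_add_const_Ico, sub_self, Nat.cast_succ, add_one_mul, add_sub_cancel_left]

theorem setLIntegral_muW {s : Set ℝ} (hs : MeasurableSet s) (hs0 : s ⊆ Ici 0) (H : ℝ → ℝ≥0∞) :
    ∫⁻ t in s, H t ∂muW r = ∫⁻ t in s, ENNReal.ofReal (exp (-r * t)) * H t := by
  rw [muW, Measure.restrict_restrict hs, inter_eq_left.2 hs0, restrict_withDensity hs,
    lintegral_withDensity_eq_lintegral_mul_non_measurable _ (by fun_prop)
      (.of_forall fun _ => ENNReal.ofReal_lt_top)]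
  rfl

theorem lintegral_muW_of_periodic (hT : 0 < T) {H : ℝ → ℝ≥0∞} (hH : Function.Periodic H T) :
    ∫⁻ t, H t ∂muW r =
      (1 - ENNReal.ofReal (exp (-r * T)))⁻¹ * ∫⁻ t in Ico 0 T, H t ∂muW r := by
  set e : ℝ → ℝ≥0∞ := fun t => ENNReal.ofReal (exp (-r * t))
  have he (s : ℝ) (k : ℕ) : e (s + k * T) = e T ^ k * e s := by
    have : -r * (s + k * T) = k * (-r * T) + -r * s := by ring
    simp only [e]
    rw [this, exp_add, exp_nat_mul, ENNReal.ofReal_mul (by positivity),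
      ENNReal.ofReal_pow (exp_nonneg _)]
  calc ∫⁻ t, H t ∂muW r
      = ∫⁻ t in Ici 0, e t * H t := by
        rw [← setLIntegral_muW measurableSet_Ici subset_rfl, muW,
          Measure.restrict_restrict_of_subset subset_rfl]
    _ = ∑' k : ℕ, e T ^ k * ∫⁻ s in Ico 0 T, e s * H s := by
        rw [lintegral_Ici_eq_tsum_Ico hT]
        congr 1
        funext k
        rw [← lintegral_const_mul' _ _ (by simp [e])]
        simp only [he, mul_assoc, show ∀ s, H (s + k * T) = H s from hH.nat_mul k]
    _ = (1 - e T)⁻¹ * ∫⁻ t in Ico 0 T, H t ∂muW r := by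
        rw [ENNReal.tsum_mul_right, ENNReal.tsum_geometric,
          setLIntegral_muW measurableSet_Ico Ico_subset_Ici_self]

theorem map_toIcoMod_muW (hT : 0 < T) :
    (muW r).map (toIcoMod hT 0) =
      (1 - ENNReal.ofReal (exp (-r * T)))⁻¹ • (muW r).restrict (Ico 0 T) := by
  ext A hA
  have hpre : MeasurableSet (toIcoMod hT 0 ⁻¹' A) := measurable_toIcoMod hT 0 hA
  have hperiodic : Function.Periodic ((toIcoMod hT 0 ⁻¹' A).indicator (1 : ℝ → ℝ≥0∞)) T := by
    intro t
    have hmem : t + T ∈ toIcoMod hT 0 ⁻¹' A ↔ t ∈ toIcoMod hT 0 ⁻¹' A := by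
      rw [mem_preimage, mem_preimage, toIcoMod_add_right]
    by_cases h : t ∈ toIcoMod hT 0 ⁻¹' A
    · rw [indicator_of_mem h, indicator_of_mem (hmem.2 h)]; rfl
    · rw [indicator_of_notMem h, indicator_of_notMem (mt hmem.1 h)]
  have hIco : toIcoMod hT 0 ⁻¹' A ∩ Ico 0 T = A ∩ Ico 0 T := by
    ext t
    refine and_congr_left fun ht => ?_
    rw [mem_preimage, (toIcoMod_eq_self hT).2 (by rwa [zero_add])]
  rw [Measure.map_apply (measurable_toIcoMod hT 0) hA, Measure.smul_apply,
    Measure.restrict_apply hA, ← lintegral_indicator_one hpre,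
    lintegral_muW_of_periodic hT hperiodic, lintegral_indicator_one hpre,
    Measure.restrict_apply hpre, hIco, smul_eq_mul]

end PeriodicExtension

theorem perExt_continuous_linear_general
    (r T α : ℝ) (hr : 0 < r) (hT : 0 < T) (hα : 1 ≤ α) (n : ℕ) :
    (∀ f g : ℝ → EuclideanSpace ℝ (Fin n), perExt T (f + g) = perExt T f + perExt T g) ∧
    (∀ (c : ℝ) (f : ℝ → EuclideanSpace ℝ (Fin n)), perExt T (c • f) = c • perExt T f) ∧
    (∀ f : ℝ → EuclideanSpace ℝ (Fin n),
      MemLp f (ENNReal.ofReal α) ((muW r).restrict (Set.Ico 0 T)) →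
      (MemLp (perExt T f) (ENNReal.ofReal α) (muW r) ∧
        (∀ᵐ t ∂(volume.restrict (Set.Ici (0:ℝ))), perExt T f (t + T) = perExt T f t) ∧
        eLpNorm (perExt T f) (ENNReal.ofReal α) (muW r) =
          ENNReal.ofReal ((1 / (1 - Real.exp (-r * T))) ^ (1 / α)) *
            eLpNorm f (ENNReal.ofReal α) ((muW r).restrict (Set.Ico 0 T)))) := by
  refine ⟨fun f g => rfl, fun c f => rfl, fun f hf => ?_⟩
  have hq : exp (-r * T) < 1 := exp_lt_one_iff.2 (by nlinarith)
  have hc : (1 - ENNReal.ofReal (exp (-r * T)))⁻¹ ≠ ∞ :=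
    ENNReal.inv_ne_top.2 (tsub_pos_of_lt (ENNReal.ofReal_lt_one.2 hq)).ne'
  have hconst : (1 - ENNReal.ofReal (exp (-r * T)))⁻¹ ^ (1 / ENNReal.ofReal α).toReal =
      ENNReal.ofReal ((1 / (1 - exp (-r * T))) ^ (1 / α)) := by
    have hpos : 0 < 1 - exp (-r * T) := by linarith
    rw [← ENNReal.ofReal_rpow_of_pos (one_div_pos.2 hpos), one_div (1 - _),
      ENNReal.ofReal_inv_of_pos hpos, ENNReal.ofReal_sub _ (exp_nonneg _), ENNReal.ofReal_one,
      one_div, ENNReal.toReal_inv, ENNReal.toReal_ofReal (by linarith), one_div]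
  have hφ : AEMeasurable (toIcoMod hT 0) (muW r) := (measurable_toIcoMod hT 0).aemeasurable
  have hf' : MemLp f (ENNReal.ofReal α) ((muW r).map (toIcoMod hT 0)) := by
    rw [map_toIcoMod_muW hT]
    exact hf.smul_measure hc
  rw [perExt_eq_comp_toIcoMod hT]
  refine ⟨hf'.comp_of_map hφ, .of_forall fun t => congrArg f (toIcoMod_add_right hT 0 t), ?_⟩
  rw [← eLpNorm_map_measure hf'.1 hφ, map_toIcoMod_muW hT,
    eLpNorm_smul_measure_of_ne_top ENNReal.ofReal_ne_top, smul_eq_mul, hconst]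

/-- `E_T` is a continuous linear map from `L^α([0,T), μ_r; ℝⁿ)` into the closure of the
continuous `T`-periodic functions in `L^α(ℝ₊, μ_r; ℝⁿ)`, with the exact norm identity
`‖E_T f‖ = (1/(1-e^{-rT}))^{1/α} ‖f‖`. -/
theorem perExt_continuous_linear
    (r T α : ℝ) (hr : 0 < r) (hT : 0 < T) (hα : 1 ≤ α) (n : ℕ) (hn : 0 < n) :
    (∀ f g : ℝ → EuclideanSpace ℝ (Fin n), perExt T (f + g) = perExt T f + perExt T g) ∧
    (∀ (c : ℝ) (f : ℝ → EuclideanSpace ℝ (Fin n)), perExt T (c • f) = c • perExt T f) ∧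
    (∀ f : ℝ → EuclideanSpace ℝ (Fin n),
      MemLp f (ENNReal.ofReal α) ((muW r).restrict (Set.Ico 0 T)) →
      (MemLp (perExt T f) (ENNReal.ofReal α) (muW r) ∧
        (∀ᵐ t ∂(volume.restrict (Set.Ici (0:ℝ))), perExt T f (t + T) = perExt T f t) ∧
        eLpNorm (perExt T f) (ENNReal.ofReal α) (muW r) =
          ENNReal.ofReal ((1 / (1 - Real.exp (-r * T))) ^ (1 / α)) *
            eLpNorm f (ENNReal.ofReal α) ((muW r).restrict (Set.Ico 0 T)))) :=
  perExt_continuous_linear_general r T α hr hT hα n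
end

section
/- Let r > 0, T > 0, α ∈ [1, ∞) and n ∈ ℕ*. If g ∈ L^α(ℝ₊, μ_r; ℝⁿ), then for Lebesgue-almost every s ∈ [0,T] the series Σ_{k=0}^∞ e^{−rkT} g(s + kT) converges absolutely in ℝⁿ, the function A(g) belongs to L^α(0,T; ℝⁿ) (with respect to Lebesgue measure), and ‖A(g)‖_{L^α(0,T)} ≤ ((1 − e^{−rT})/e^{−rT})^{1/α} ‖g‖_{L^α(ℝ₊, μ_r)}. Consequently A is a bounded linear operator from L^α(ℝ₊, μ_r; ℝⁿ) into L^α(0,T; ℝⁿ). -/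
/-!
Write `c = e^{-rT}`. The weights `(1 - c) c^k` form a probability distribution on `ℕ`, so Jensen's
inequality gives `|A g (s)|^α ≤ Σ_k (1 - c) c^k |g (s + kT)|^α`. On the block `[kT, (k+1)T)` one has
`c^{k+1} ≤ e^{-rt}`, so after integrating over `s ∈ [0, T)` the `k`-th term is at most
`(1 - c)/c · ∫_{kT}^{(k+1)T} e^{-rt} |g t|^α dt`, and these blocks tile `ℝ₊`. Finiteness of the
bound gives absolute convergence of the series for almost every `s`; linearity then holds
wherever both series converge.
-/

open MeasureTheory Real Set

/-- The averaging operator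
`A(g)(s) = (1 - e^{-rT}) Σ_{k=0}^∞ e^{-rkT} g(s + kT)`. -/
noncomputable def avgOp {G : Type*} [NormedAddCommGroup G] [NormedSpace ℝ G]
    (r T : ℝ) (g : ℝ → G) : ℝ → G :=
  fun s => (1 - Real.exp (-r * T)) • ∑' k : ℕ, Real.exp (-(r * k * T)) • g (s + k * T)

open Filter
open scoped ENNReal

theorem ENNReal.rpow_tsum_mul_le_tsum_mul_rpow {ι : Type*} {p : ℝ} (hp : 1 ≤ p)
    {w : ι → ℝ≥0∞} (hw : ∑' i, w i = 1) (a : ι → ℝ≥0∞) :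
    (∑' i, w i * a i) ^ p ≤ ∑' i, w i * a i ^ p := by
  obtain rfl | hp := hp.eq_or_lt
  · simp
  let _ : MeasurableSpace ι := ⊤
  have hpq : p.HolderConjugate p.conjExponent := .conjExponent hp
  set q := p.conjExponent
  have hp0 : 0 < p := hpq.pos
  have hq0 : 0 < q := hpq.symm.pos
  -- Hölder against counting measure, after splitting `w i = w i ^ (1/p) * w i ^ (1/q)`
  have H := ENNReal.lintegral_mul_le_Lp_mul_Lq Measure.count hpq
    (f := fun i => w i ^ (1 / p) * a i) (g := fun i => w i ^ (1 / q)) .of_discrete .of_discrete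
  have hsplit : ∀ i, w i ^ (1 / p) * a i * w i ^ (1 / q) = w i * a i := fun i => by
    rw [mul_right_comm, ← ENNReal.rpow_add_of_nonneg _ _ (by positivity) (by positivity),
      one_div, one_div, hpq.inv_add_inv_eq_one, ENNReal.rpow_one]
  have hpow : ∀ {s : ℝ}, 0 < s → ∀ x : ℝ≥0∞, (x ^ (1 / s)) ^ s = x := fun hs x => by
    rw [← ENNReal.rpow_mul, one_div_mul_cancel hs.ne', ENNReal.rpow_one]
  simp only [lintegral_count, Pi.mul_apply, hsplit, ENNReal.mul_rpow_of_nonneg _ _ hp0.le,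
    hpow hp0, hpow hq0, hw, ENNReal.one_rpow, mul_one] at H
  calc (∑' i, w i * a i) ^ p ≤ ((∑' i, w i * a i ^ p) ^ (1 / p)) ^ p := by gcongr
    _ = ∑' i, w i * a i ^ p := hpow hp0 _

theorem lintegral_Ici_zero_eq_tsum_lintegral_Ico_add {T : ℝ} (hT : 0 < T) (f : ℝ → ℝ≥0∞) :
    ∫⁻ t in Ici 0, f t = ∑' k : ℕ, ∫⁻ s in Ico 0 T, f (s + k * T) := by
  have hcover : (⋃ k : ℕ, Ico (k * T) (k * T + T)) = Ici 0 := by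
    ext t
    simp only [mem_iUnion, mem_Ico, mem_Ici]
    refine ⟨fun ⟨k, hk, _⟩ => (by positivity : (0 : ℝ) ≤ k * T).trans hk, fun ht => ?_⟩
    refine ⟨⌊t / T⌋₊, ?_, ?_⟩
    · rw [← le_div_iff₀ hT]
      exact Nat.floor_le (by positivity)
    · rw [← add_one_mul, ← div_lt_iff₀ hT]
      exact Nat.lt_floor_add_one _
  have hdisj : Pairwise (Function.onFun Disjoint fun k : ℕ => Ico ((k : ℝ) * T) (k * T + T)) := by
    intro i j hij
    simpa [Function.onFun, add_mul] using
      pairwise_disjoint_Ico_add_zsmul (0 : ℝ) T (Nat.cast_injective.ne hij)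
  rw [← hcover, lintegral_iUnion (fun _ => measurableSet_Ico) hdisj]
  refine tsum_congr fun k => ?_
  have htrans := measurePreserving_add_right volume ((k : ℝ) * T)
  rw [← htrans.setLIntegral_comp_preimage_emb (measurableEmbedding_addRight _),
    preimage_add_const_Ico, sub_self, add_sub_cancel_left]

theorem restrict_Ici_absolutelyContinuous_muW (r : ℝ) : volume.restrict (Ici 0) ≪ muW r := by
  rw [muW, restrict_withDensity measurableSet_Ici]
  exact withDensity_absolutelyContinuous' (by fun_prop)
    (ae_of_all _ fun t => ENNReal.ofReal_pos.2 (exp_pos _) |>.ne')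

theorem lintegral_muW (r : ℝ) {f : ℝ → ℝ≥0∞} (hf : Measurable f) :
    ∫⁻ t, f t ∂muW r = ∫⁻ t in Ici 0, ENNReal.ofReal (exp (-r * t)) * f t :=
  setLIntegral_withDensity_eq_setLIntegral_mul _ (by fun_prop) hf measurableSet_Ici

theorem ae_restrict_Ici_forall_add_nat_mul {T : ℝ} (hT : 0 ≤ T) {p : ℝ → Prop}
    (h : ∀ᵐ t ∂volume.restrict (Ici 0), p t) :
    ∀ᵐ s ∂volume.restrict (Ici 0), ∀ k : ℕ, p (s + k * T) := by
  refine ae_all_iff.2 fun k => ?_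
  rw [ae_restrict_iff' measurableSet_Ici] at h ⊢
  filter_upwards [(measurePreserving_add_right volume ((k : ℝ) * T)).quasiMeasurePreserving.ae h]
    with s hs hs0
  exact hs (mem_Ici.2 (add_nonneg (mem_Ici.1 hs0) (by positivity)))

theorem tsum_ofReal_geometric_weights {c : ℝ} (hc0 : 0 ≤ c) (hc1 : c < 1) :
    ∑' k : ℕ, ENNReal.ofReal ((1 - c) * c ^ k) = 1 := by
  have h1c : 0 < 1 - c := sub_pos.2 hc1
  have hsum : HasSum (fun k : ℕ => (1 - c) * c ^ k) 1 := by
    simpa [mul_inv_cancel₀ h1c.ne'] using (hasSum_geometric_of_lt_one hc0 hc1).mul_left (1 - c)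
  rw [← ENNReal.ofReal_tsum_of_nonneg (fun k => by positivity) hsum.summable, hsum.tsum_eq,
    ENNReal.ofReal_one]

theorem exp_neg_mul_pow_succ_le {r T s : ℝ} (hr : 0 ≤ r) (hs : s ≤ T) (k : ℕ) :
    exp (-r * T) ^ (k + 1) ≤ exp (-r * (s + k * T)) := by
  rw [← exp_nat_mul, exp_le_exp]
  push_cast
  nlinarith

theorem setLIntegral_rpow_tsum_geometric_le {r T α : ℝ} (hr : 0 < r) (hT : 0 < T) (hα : 1 ≤ α)
    {F : ℝ → ℝ≥0∞} (hF : Measurable F) :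
    ∫⁻ s in Icc 0 T,
        (∑' k : ℕ, ENNReal.ofReal ((1 - exp (-r * T)) * exp (-r * T) ^ k) * F (s + k * T)) ^ α
      ≤ ENNReal.ofReal ((1 - exp (-r * T)) / exp (-r * T)) * ∫⁻ t, F t ^ α ∂muW r := by
  set c := exp (-r * T)
  have hc0 : 0 < c := exp_pos _
  have hc1 : c < 1 := Real.exp_lt_one_iff.2 (by nlinarith)
  have h1c : 0 < 1 - c := sub_pos.2 hc1
  have hFα : Measurable fun t => F t ^ α := hF.pow_const α
  calc _ ≤ ∫⁻ s in Ico 0 T, ∑' k : ℕ, ENNReal.ofReal ((1 - c) * c ^ k) * F (s + k * T) ^ α := by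
        rw [Measure.restrict_congr_set Ico_ae_eq_Icc.symm]
        exact lintegral_mono fun s =>
          ENNReal.rpow_tsum_mul_le_tsum_mul_rpow hα (tsum_ofReal_geometric_weights hc0.le hc1) _
    _ = ∑' k : ℕ, ∫⁻ s in Ico 0 T, ENNReal.ofReal ((1 - c) * c ^ k) * F (s + k * T) ^ α :=
        lintegral_tsum fun k => by fun_prop
    _ ≤ ∑' k : ℕ, ∫⁻ s in Ico 0 T, ENNReal.ofReal ((1 - c) / c) *
          (ENNReal.ofReal (exp (-r * (s + k * T))) * F (s + k * T) ^ α) := by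
        refine ENNReal.tsum_le_tsum fun k => setLIntegral_mono' measurableSet_Ico fun s hs => ?_
        rw [← mul_assoc, ← ENNReal.ofReal_mul (by positivity)]
        gcongr ?_ * _
        refine ENNReal.ofReal_le_ofReal ?_
        calc (1 - c) * c ^ k = (1 - c) / c * c ^ (k + 1) := by field_simp; ring
          _ ≤ _ := by gcongr; exact exp_neg_mul_pow_succ_le hr.le hs.2.le k
    _ = ENNReal.ofReal ((1 - c) / c) * ∫⁻ t, F t ^ α ∂muW r := by
        simp_rw [lintegral_const_mul' _ _ ENNReal.ofReal_ne_top]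
        rw [ENNReal.tsum_mul_left, lintegral_muW r hFα,
          lintegral_Ici_zero_eq_tsum_lintegral_Ico_add hT]

theorem AEStronglyMeasurable.tsum_of_ae_summable {X E : Type*} [MeasurableSpace X]
    {μ : Measure X} [NormedAddCommGroup E] {f : ℕ → X → E}
    (hf : ∀ k, AEStronglyMeasurable (f k) μ) (hsum : ∀ᵐ x ∂μ, Summable fun k => f k x) :
    AEStronglyMeasurable (fun x => ∑' k, f k x) μ :=
  aestronglyMeasurable_of_tendsto_ae atTop
    (fun _ => Finset.aestronglyMeasurable_fun_sum _ fun k _ => hf k)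
    (hsum.mono fun _ hx => hx.hasSum.tendsto_sum_nat)

section avgOp

variable {G : Type*} [NormedAddCommGroup G] [NormedSpace ℝ G] {r T : ℝ}

theorem exp_neg_mul_nat_mul (r T : ℝ) (k : ℕ) : exp (-(r * k * T)) = exp (-r * T) ^ k := by
  rw [← exp_nat_mul]
  ring_nf

theorem enorm_avgOp_le (g : ℝ → G) (s : ℝ) :
    ‖avgOp r T g s‖ₑ ≤ ‖1 - exp (-r * T)‖ₑ * ∑' k : ℕ, ‖exp (-(r * k * T)) • g (s + k * T)‖ₑ := by
  rw [avgOp, enorm_smul]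
  gcongr
  exact enorm_tsum_le_tsum_enorm

theorem enorm_one_sub_mul_tsum_enorm_eq (hrT : 0 ≤ r * T) (g : ℝ → G) (s : ℝ) :
    ‖1 - exp (-r * T)‖ₑ * ∑' k : ℕ, ‖exp (-(r * k * T)) • g (s + k * T)‖ₑ
      = ∑' k : ℕ, ENNReal.ofReal ((1 - exp (-r * T)) * exp (-r * T) ^ k) * ‖g (s + k * T)‖ₑ := by
  have h1c : 0 ≤ 1 - exp (-r * T) := sub_nonneg.2 (Real.exp_le_one_iff.2 (by linarith))
  rw [← ENNReal.tsum_mul_left]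
  refine tsum_congr fun k => ?_
  rw [enorm_smul, Real.enorm_eq_ofReal h1c, Real.enorm_eq_ofReal (exp_pos _).le,
    exp_neg_mul_nat_mul, ← mul_assoc, ENNReal.ofReal_mul h1c]

theorem tsum_enorm_exp_smul_ne_top_iff (g : ℝ → G) (s : ℝ) :
    ∑' k : ℕ, ‖exp (-(r * k * T)) • g (s + k * T)‖ₑ ≠ ∞ ↔
      Summable fun k : ℕ => exp (-(r * k * T)) * ‖g (s + k * T)‖ := by
  simp only [tsum_enorm_ne_top_iff_summable_norm, norm_smul, Real.norm_of_nonneg (exp_pos _).le]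

theorem summable_exp_smul_of_summable_mul_norm [CompleteSpace G] {g : ℝ → G} {s : ℝ}
    (h : Summable fun k : ℕ => exp (-(r * k * T)) * ‖g (s + k * T)‖) :
    Summable fun k : ℕ => exp (-(r * k * T)) • g (s + k * T) :=
  .of_norm <| by simpa only [norm_smul, Real.norm_of_nonneg (exp_pos _).le] using h

theorem avgOp_add_apply {g h : ℝ → G} {s : ℝ}
    (hg : Summable fun k : ℕ => exp (-(r * k * T)) • g (s + k * T))
    (hh : Summable fun k : ℕ => exp (-(r * k * T)) • h (s + k * T)) :
    avgOp r T (g + h) s = avgOp r T g s + avgOp r T h s := by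
  simp only [avgOp, Pi.add_apply, smul_add, hg.tsum_add hh]

theorem avgOp_smul_apply (c : ℝ) (g : ℝ → G) (s : ℝ) :
    avgOp r T (c • g) s = c • avgOp r T g s := by
  simp only [avgOp, Pi.smul_apply, smul_comm _ c, tsum_const_smul'']

theorem setLIntegral_rpow_majorant_le (hr : 0 < r) (hT : 0 < T) {α : ℝ} (hα : 1 ≤ α)
    {g : ℝ → G} (hgm : StronglyMeasurable g) :
    ∫⁻ s in Icc 0 T,
        (‖1 - exp (-r * T)‖ₑ * ∑' k : ℕ, ‖exp (-(r * k * T)) • g (s + k * T)‖ₑ) ^ α ≤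
      ENNReal.ofReal ((1 - exp (-r * T)) / exp (-r * T)) *
        eLpNorm g (ENNReal.ofReal α) (muW r) ^ α := by
  have hα0 : 0 < α := one_pos.trans_le hα
  simp only [enorm_one_sub_mul_tsum_enorm_eq (mul_pos hr hT).le]
  refine (setLIntegral_rpow_tsum_geometric_le hr hT hα hgm.enorm).trans_eq ?_
  rw [lintegral_rpow_enorm_eq_rpow_eLpNorm' hα0,
    eLpNorm_eq_eLpNorm' (by simpa using hα0) ENNReal.ofReal_ne_top, ENNReal.toReal_ofReal hα0.le]

variable [CompleteSpace G]

theorem avgOp_memLp_of_stronglyMeasurable (hr : 0 < r) (hT : 0 < T) {α : ℝ} (hα : 1 ≤ α)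
    {g : ℝ → G} (hgm : StronglyMeasurable g) (hg : MemLp g (ENNReal.ofReal α) (muW r)) :
    (∀ᵐ s ∂(volume.restrict (Icc 0 T)),
        Summable fun k : ℕ => exp (-(r * k * T)) * ‖g (s + k * T)‖) ∧
      MemLp (avgOp r T g) (ENNReal.ofReal α) (volume.restrict (Icc 0 T)) ∧
      eLpNorm (avgOp r T g) (ENNReal.ofReal α) (volume.restrict (Icc 0 T)) ≤
        ENNReal.ofReal (((1 - exp (-r * T)) / exp (-r * T)) ^ (1 / α)) *
          eLpNorm g (ENNReal.ofReal α) (muW r) := by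
  have hα0 : 0 < α := one_pos.trans_le hα
  have hp0 : ENNReal.ofReal α ≠ 0 := by simpa using hα0
  have hc1 : exp (-r * T) < 1 := Real.exp_lt_one_iff.2 (by nlinarith)
  have hc0 : 0 < exp (-r * T) := exp_pos _
  have htrans : ∀ k : ℕ, StronglyMeasurable fun s => exp (-(r * k * T)) • g (s + k * T) :=
    fun k => (hgm.comp_measurable (measurable_add_const _)).const_smul _
  have hM := setLIntegral_rpow_majorant_le hr hT hα hgm
  set M : ℝ → ℝ≥0∞ := fun s => ∑' k : ℕ, ‖exp (-(r * k * T)) • g (s + k * T)‖ₑ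
  have hsum : ∀ᵐ s ∂(volume.restrict (Icc 0 T)),
      Summable fun k : ℕ => exp (-(r * k * T)) * ‖g (s + k * T)‖ := by
    have hmeas : Measurable fun s => (‖1 - exp (-r * T)‖ₑ * M s) ^ α :=
      ((Measurable.tsum fun k => (htrans k).enorm).const_mul _).pow_const α
    filter_upwards [ae_lt_top hmeas (ne_top_of_le_ne_top (by finiteness) hM)] with s hs
    rw [← tsum_enorm_exp_smul_ne_top_iff]
    refine fun hMs => ((ENNReal.rpow_lt_top_iff_of_pos hα0).1 hs).ne ?_
    rw [show M s = ∞ from hMs, ENNReal.mul_top (enorm_ne_zero.2 (sub_ne_zero.2 hc1.ne'))]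
  have hbound : eLpNorm (avgOp r T g) (ENNReal.ofReal α) (volume.restrict (Icc 0 T)) ≤
      ENNReal.ofReal (((1 - exp (-r * T)) / exp (-r * T)) ^ (1 / α)) *
        eLpNorm g (ENNReal.ofReal α) (muW r) := by
    rw [eLpNorm_eq_lintegral_rpow_enorm_toReal hp0 ENNReal.ofReal_ne_top,
      ENNReal.toReal_ofReal hα0.le]
    calc (∫⁻ s in Icc 0 T, ‖avgOp r T g s‖ₑ ^ α) ^ (1 / α)
        ≤ (ENNReal.ofReal ((1 - exp (-r * T)) / exp (-r * T)) *
            eLpNorm g (ENNReal.ofReal α) (muW r) ^ α) ^ (1 / α) := by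
          gcongr
          refine le_trans (lintegral_mono fun s => ?_) hM
          gcongr
          exact enorm_avgOp_le g s
      _ = _ := by
          rw [ENNReal.mul_rpow_of_nonneg _ _ (by positivity), ← ENNReal.rpow_mul,
            mul_one_div_cancel hα0.ne', ENNReal.rpow_one,
            ENNReal.ofReal_rpow_of_nonneg (div_nonneg (sub_nonneg.2 hc1.le) hc0.le)
              (by positivity)]
  have haesm : AEStronglyMeasurable (avgOp r T g) (volume.restrict (Icc 0 T)) :=
    (AEStronglyMeasurable.tsum_of_ae_summable (fun k => (htrans k).aestronglyMeasurable)
      (hsum.mono fun _ => summable_exp_smul_of_summable_mul_norm)).const_smul _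
  exact ⟨hsum, ⟨haesm, hbound.trans_lt (by finiteness)⟩, hbound⟩

theorem avgOp_memLp (hr : 0 < r) (hT : 0 < T) {α : ℝ} (hα : 1 ≤ α) {g : ℝ → G}
    (hg : MemLp g (ENNReal.ofReal α) (muW r)) :
    (∀ᵐ s ∂(volume.restrict (Icc 0 T)),
        Summable fun k : ℕ => exp (-(r * k * T)) * ‖g (s + k * T)‖) ∧
      MemLp (avgOp r T g) (ENNReal.ofReal α) (volume.restrict (Icc 0 T)) ∧
      eLpNorm (avgOp r T g) (ENNReal.ofReal α) (volume.restrict (Icc 0 T)) ≤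
        ENNReal.ofReal (((1 - exp (-r * T)) / exp (-r * T)) ^ (1 / α)) *
          eLpNorm g (ENNReal.ofReal α) (muW r) := by
  set g' := hg.1.mk g
  have hgg' : g =ᵐ[muW r] g' := hg.1.ae_eq_mk
  -- `A g (s)` only samples `g` on `s + ℕ T`, where `g = g'` for almost every `s ∈ [0, T]`
  have hshift : ∀ᵐ s ∂(volume.restrict (Icc 0 T)), ∀ k : ℕ, g (s + k * T) = g' (s + k * T) :=
    ae_restrict_of_ae_restrict_of_subset Icc_subset_Ici_self
      (ae_restrict_Ici_forall_add_nat_mul hT.le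
        ((restrict_Ici_absolutelyContinuous_muW r).ae_eq hgg'))
  have havg : avgOp r T g =ᵐ[volume.restrict (Icc 0 T)] avgOp r T g' :=
    hshift.mono fun s hs => by simp only [avgOp, hs]
  obtain ⟨hsum, hmem, hbound⟩ :=
    avgOp_memLp_of_stronglyMeasurable hr hT hα hg.1.stronglyMeasurable_mk (hg.ae_eq hgg')
  refine ⟨(hshift.and hsum).mono fun s ⟨hs, h⟩ => by simpa only [hs] using h,
    hmem.ae_eq havg.symm, ?_⟩
  rwa [eLpNorm_congr_ae havg, eLpNorm_congr_ae hgg']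

end avgOp

theorem avgOp_bounded_linear_general
    (r T α : ℝ) (hr : 0 < r) (hT : 0 < T) (hα : 1 ≤ α) (n : ℕ) :
    (∀ g : ℝ → EuclideanSpace ℝ (Fin n), MemLp g (ENNReal.ofReal α) (muW r) →
      ((∀ᵐ s ∂(volume.restrict (Set.Icc (0:ℝ) T)),
          Summable fun k : ℕ => Real.exp (-(r * k * T)) * ‖g (s + k * T)‖) ∧
        MemLp (avgOp r T g) (ENNReal.ofReal α) (volume.restrict (Set.Icc (0:ℝ) T)) ∧
        eLpNorm (avgOp r T g) (ENNReal.ofReal α) (volume.restrict (Set.Icc (0:ℝ) T)) ≤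
          ENNReal.ofReal (((1 - Real.exp (-r * T)) / Real.exp (-r * T)) ^ (1 / α)) *
            eLpNorm g (ENNReal.ofReal α) (muW r))) ∧
    -- linearity (almost everywhere on `[0,T]`) :
    (∀ g h : ℝ → EuclideanSpace ℝ (Fin n),
      MemLp g (ENNReal.ofReal α) (muW r) → MemLp h (ENNReal.ofReal α) (muW r) →
      ∀ᵐ s ∂(volume.restrict (Set.Icc (0:ℝ) T)),
        avgOp r T (g + h) s = avgOp r T g s + avgOp r T h s) ∧
    (∀ (c : ℝ) (g : ℝ → EuclideanSpace ℝ (Fin n)),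
      MemLp g (ENNReal.ofReal α) (muW r) →
      ∀ᵐ s ∂(volume.restrict (Set.Icc (0:ℝ) T)),
        avgOp r T (c • g) s = c • avgOp r T g s) := by
  refine ⟨fun g hg => avgOp_memLp hr hT hα hg, fun g h hg hh => ?_,
    fun c g _ => ae_of_all _ (avgOp_smul_apply c g)⟩
  filter_upwards [(avgOp_memLp hr hT hα hg).1, (avgOp_memLp hr hT hα hh).1] with s hgs hhs
  exact avgOp_add_apply (summable_exp_smul_of_summable_mul_norm hgs)
    (summable_exp_smul_of_summable_mul_norm hhs)

/-- If `g ∈ L^α(ℝ₊, μ_r; ℝⁿ)`, then for a.e. `s ∈ [0,T]` the series defining `A(g)(s)`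
converges absolutely, `A(g) ∈ L^α(0,T;ℝⁿ)`, and
`‖A(g)‖_{L^α(0,T)} ≤ ((1-e^{-rT})/e^{-rT})^{1/α} ‖g‖_{L^α(ℝ₊,μ_r)}`.
Moreover `A` is (a.e.) additive and homogeneous, hence a bounded linear operator. -/
theorem avgOp_bounded_linear
    (r T α : ℝ) (hr : 0 < r) (hT : 0 < T) (hα : 1 ≤ α) (n : ℕ) (hn : 0 < n) :
    (∀ g : ℝ → EuclideanSpace ℝ (Fin n), MemLp g (ENNReal.ofReal α) (muW r) →
      ((∀ᵐ s ∂(volume.restrict (Set.Icc (0:ℝ) T)),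
          Summable fun k : ℕ => Real.exp (-(r * k * T)) * ‖g (s + k * T)‖) ∧
        MemLp (avgOp r T g) (ENNReal.ofReal α) (volume.restrict (Set.Icc (0:ℝ) T)) ∧
        eLpNorm (avgOp r T g) (ENNReal.ofReal α) (volume.restrict (Set.Icc (0:ℝ) T)) ≤
          ENNReal.ofReal (((1 - Real.exp (-r * T)) / Real.exp (-r * T)) ^ (1 / α)) *
            eLpNorm g (ENNReal.ofReal α) (muW r))) ∧
    -- linearity (almost everywhere on `[0,T]`) :
    (∀ g h : ℝ → EuclideanSpace ℝ (Fin n),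
      MemLp g (ENNReal.ofReal α) (muW r) → MemLp h (ENNReal.ofReal α) (muW r) →
      ∀ᵐ s ∂(volume.restrict (Set.Icc (0:ℝ) T)),
        avgOp r T (g + h) s = avgOp r T g s + avgOp r T h s) ∧
    (∀ (c : ℝ) (g : ℝ → EuclideanSpace ℝ (Fin n)),
      MemLp g (ENNReal.ofReal α) (muW r) →
      ∀ᵐ s ∂(volume.restrict (Set.Icc (0:ℝ) T)),
        avgOp r T (c • g) s = c • avgOp r T g s) :=
  avgOp_bounded_linear_general r T α hr hT hα n
end

section
/- Let r > 0, T > 0, n ∈ ℕ* and L : ℝ₊ × ℝⁿ × ℝⁿ → ℝ. If L satisfies property (P1), then the averaged Lagrangian A₁(L) is well defined and continuous on [0,T] × ℝⁿ × ℝⁿ. -/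
/-!
By (P1) with `ε = 1`, `L` moves by at most `1` over each time step of length `δ`, uniformly for
`(x, y)` in a `δ`-ball, so `L` grows at most linearly in time, locally uniformly in `(x, y)`.
Against the geometric weights `e^{-rkT}` the linear growth is summable, and (P1) also makes `L`
jointly continuous on `ℝ₊ × ℝⁿ × ℝⁿ`; the Weierstrass M-test then gives both the convergence of
the series and, locally uniformly, the continuity of its sum.
-/

open MeasureTheory Real Set

/-- The averaged map
`A₁(Φ)(s,x,y) = (1 - e^{-rT}) Σ_{k=0}^∞ e^{-rkT} Φ(s + kT, x, y)` (defined via `tsum`). -/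
noncomputable def A1v {G F : Type*} [NormedAddCommGroup F] [NormedSpace ℝ F]
    (r T : ℝ) (Φ : ℝ → G → G → F) : ℝ → G → G → F :=
  fun s x y => (1 - Real.exp (-r * T)) • ∑' k : ℕ, Real.exp (-(r * k * T)) • Φ (s + k * T) x y

/-- Property (P1) : uniform continuity, in the time variable uniformly over `ℝ₊`, near each
fixed `(x,y)`. -/
def P1Prop {G F : Type*} [NormedAddCommGroup G] [NormedAddCommGroup F]
    (Φ : ℝ → G → G → F) : Prop :=
  ∀ (x y : G), ∀ ε : ℝ, 0 < ε → ∃ δ : ℝ, 0 < δ ∧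
    ∀ t ∈ Set.Ici (0:ℝ), ∀ t₁ ∈ Set.Ici (0:ℝ), ∀ x₁ y₁ : G,
      |t - t₁| ≤ δ → ‖x - x₁‖ ≤ δ → ‖y - y₁‖ ≤ δ → ‖Φ t x y - Φ t₁ x₁ y₁‖ ≤ ε

open Filter Topology

lemma dist_le_one_add_div_of_dist_le_one {E : Type*} [PseudoMetricSpace E] {f : ℝ → E}
    {δ : ℝ} (hδ : 0 < δ)
    (hf : ∀ t ∈ Ici (0 : ℝ), ∀ t₁ ∈ Ici (0 : ℝ), |t - t₁| ≤ δ → dist (f t) (f t₁) ≤ 1)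
    {t : ℝ} (ht : 0 ≤ t) : dist (f t) (f 0) ≤ 1 + t / δ := by
  have hnear : ∀ t, 0 ≤ t → t ≤ δ → dist (f t) (f 0) ≤ 1 := fun t ht htδ =>
    hf t ht 0 (mem_Ici.mpr le_rfl) (by rwa [sub_zero, abs_of_nonneg ht])
  have step : ∀ m : ℕ, ∀ t, 0 ≤ t → t ≤ (m + 1) * δ → dist (f t) (f 0) ≤ m + 1 := by
    intro m
    induction m with
    | zero => simpa using hnear
    | succ m ih =>
      intro t ht htδ
      rcases le_or_gt t δ with hsmall | hsmall
      · linarith [hnear t ht hsmall, (m + 1 : ℕ).cast_nonneg (α := ℝ)]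
      · have hprev := ih (t - δ) (by linarith) (by push_cast at htδ; linarith)
        have hlast := hf t ht (t - δ) (by simp only [mem_Ici]; linarith)
          (by rw [sub_sub_cancel, abs_of_pos hδ])
        calc dist (f t) (f 0) ≤ dist (f t) (f (t - δ)) + dist (f (t - δ)) (f 0) :=
              dist_triangle _ _ _
          _ ≤ _ := by push_cast; linarith
  have hfloor : t / δ < ⌊t / δ⌋₊ + 1 := Nat.lt_floor_add_one _
  calc dist (f t) (f 0) ≤ ⌊t / δ⌋₊ + 1 :=
        step _ t ht ((div_lt_iff₀ hδ).mp hfloor).le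
    _ ≤ 1 + t / δ := by linarith [Nat.floor_le (div_nonneg ht hδ.le)]

section WeightedSeries

variable {F : Type*} [NormedAddCommGroup F] [NormedSpace ℝ F] {r T : ℝ}

lemma summable_exp_neg_mul_mul_add (hr : 0 < r) (hT : 0 < T) (A B : ℝ) :
    Summable fun k : ℕ => exp (-(r * k * T)) * (A + B * k) := by
  have hrT : 0 < r * T := mul_pos hr hT
  refine (((summable_pow_mul_exp_neg_nat_mul 0 hrT).mul_left A).add
    ((summable_pow_mul_exp_neg_nat_mul 1 hrT).mul_left B)).congr fun k => ?_
  ring_nf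

lemma norm_exp_neg_smul_le {g : ℝ → F} {C D : ℝ} (hD : 0 ≤ D)
    (hg : ∀ t, 0 ≤ t → ‖g t‖ ≤ C + D * t) (hT : 0 ≤ T) {s : ℝ} (hs : s ∈ Icc 0 T) (k : ℕ) :
    ‖exp (-(r * k * T)) • g (s + k * T)‖ ≤ exp (-(r * k * T)) * (C + D * T + D * T * k) := by
  rw [norm_smul, norm_of_nonneg (exp_pos _).le]
  gcongr
  have hkT : 0 ≤ (k : ℝ) * T := by positivity
  calc ‖g (s + k * T)‖ ≤ C + D * (s + k * T) := hg _ (add_nonneg hs.1 hkT)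
    _ ≤ C + D * T + D * T * k := by nlinarith [hs.2]

lemma summable_exp_neg_smul [CompleteSpace F] {g : ℝ → F} {C D : ℝ} (hD : 0 ≤ D)
    (hg : ∀ t, 0 ≤ t → ‖g t‖ ≤ C + D * t) (hr : 0 < r) (hT : 0 < T) {s : ℝ} (hs : s ∈ Icc 0 T) :
    Summable fun k : ℕ => exp (-(r * k * T)) • g (s + k * T) :=
  .of_norm_bounded (summable_exp_neg_mul_mul_add hr hT _ _) (norm_exp_neg_smul_le hD hg hT.le hs)

lemma continuousOn_tsum_exp_neg_smul [CompleteSpace F] {X : Type*} [TopologicalSpace X]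
    {f : ℝ → X → F} (hr : 0 < r) (hT : 0 < T)
    (hf : ContinuousOn (fun q : ℝ × X => f q.1 q.2) (Ici 0 ×ˢ univ))
    (hbound : ∀ x, ∃ C D, 0 ≤ D ∧ ∀ᶠ x' in 𝓝 x, ∀ t, 0 ≤ t → ‖f t x'‖ ≤ C + D * t) :
    ContinuousOn (fun q : ℝ × X => ∑' k : ℕ, exp (-(r * k * T)) • f (q.1 + k * T) q.2)
      (Icc 0 T ×ˢ univ) := by
  refine continuousOn_of_locally_continuousOn fun q _ => ?_
  obtain ⟨C, D, hD, hq⟩ := hbound q.2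
  obtain ⟨U, hU, hUo, hqU⟩ := eventually_nhds_iff.mp hq
  refine ⟨univ ×ˢ U, isOpen_univ.prod hUo, ⟨trivial, hqU⟩, ?_⟩
  refine (continuousOn_tsum (fun k => ?_) (summable_exp_neg_mul_mul_add hr hT _ _)
    fun k p hp => norm_exp_neg_smul_le hD (hU p.2 hp.2.2) hT.le hp.1.1 k).mono fun p hp => hp
  have hshift : MapsTo (fun p : ℝ × X => (p.1 + k * T, p.2)) ((Icc 0 T ×ˢ univ) ∩ (univ ×ˢ U))
      (Ici 0 ×ˢ univ) := fun p hp =>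
    ⟨add_nonneg hp.1.1.1 (by positivity), trivial⟩
  exact ((hf.comp (by fun_prop) hshift).const_smul _)

end WeightedSeries

namespace P1Prop

variable {G F : Type*} [NormedAddCommGroup G] [NormedAddCommGroup F] {Φ : ℝ → G → G → F}

lemma continuousOn_uncurry (hΦ : P1Prop Φ) :
    ContinuousOn (fun q : ℝ × G × G => Φ q.1 q.2.1 q.2.2) (Ici 0 ×ˢ univ) := by
  rintro ⟨t, x, y⟩ ⟨ht, -⟩
  refine Metric.continuousWithinAt_iff.mpr fun ε hε => ?_
  obtain ⟨δ, hδ, hΦδ⟩ := hΦ x y (ε / 2) (half_pos hε)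
  refine ⟨δ, hδ, ?_⟩
  rintro ⟨t₁, x₁, y₁⟩ ⟨ht₁, -⟩ hdist
  simp only [Prod.dist_eq, max_lt_iff] at hdist
  rw [dist_eq_norm, norm_sub_rev]
  have := hΦδ t ht t₁ ht₁ x₁ y₁ (by rw [← Real.dist_eq, dist_comm]; exact hdist.1.le)
    (by rw [← dist_eq_norm, dist_comm]; exact hdist.2.1.le)
    (by rw [← dist_eq_norm, dist_comm]; exact hdist.2.2.le)
  linarith

lemma exists_eventually_norm_le (hΦ : P1Prop Φ) (p : G × G) :
    ∃ C D, 0 ≤ D ∧ ∀ᶠ q in 𝓝 p, ∀ t, 0 ≤ t → ‖Φ t q.1 q.2‖ ≤ C + D * t := by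
  obtain ⟨δ, hδ, hΦδ⟩ := hΦ p.1 p.2 1 one_pos
  refine ⟨‖Φ 0 p.1 p.2‖ + 2, 1 / δ, by positivity, ?_⟩
  filter_upwards [Metric.closedBall_mem_nhds p hδ] with q hq t ht
  rw [Metric.mem_closedBall, Prod.dist_eq, max_le_iff] at hq
  have hspace : dist (Φ t q.1 q.2) (Φ t p.1 p.2) ≤ 1 := by
    rw [dist_comm, dist_eq_norm]
    exact hΦδ t ht t ht q.1 q.2 (by simpa using hδ.le)
      (by rw [← dist_eq_norm, dist_comm]; exact hq.1)
      (by rw [← dist_eq_norm, dist_comm]; exact hq.2)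
  have htime : dist (Φ t p.1 p.2) (Φ 0 p.1 p.2) ≤ 1 + t / δ := by
    refine dist_le_one_add_div_of_dist_le_one (f := (Φ · p.1 p.2)) hδ
      (fun s hs s₁ hs₁ hss => ?_) ht
    rw [dist_eq_norm]
    exact hΦδ s hs s₁ hs₁ p.1 p.2 hss (by simpa using hδ.le) (by simpa using hδ.le)
  have := dist_triangle4 (Φ t q.1 q.2) (Φ t p.1 p.2) (Φ 0 p.1 p.2) 0
  rw [dist_zero_right, dist_zero_right] at this
  rw [one_div_mul_eq_div]
  linarith

end P1Prop

theorem A1_continuous_of_P1_general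
    (r T : ℝ) (hr : 0 < r) (hT : 0 < T) (n : ℕ)
    (L : ℝ → EuclideanSpace ℝ (Fin n) → EuclideanSpace ℝ (Fin n) → ℝ)
    (hP1 : P1Prop L) :
    (∀ s ∈ Set.Icc (0:ℝ) T, ∀ x y : EuclideanSpace ℝ (Fin n),
      Summable fun k : ℕ => Real.exp (-(r * k * T)) • L (s + k * T) x y) ∧
    ContinuousOn
      (fun p : ℝ × EuclideanSpace ℝ (Fin n) × EuclideanSpace ℝ (Fin n) =>
        A1v r T L p.1 p.2.1 p.2.2)
      (Set.Icc (0:ℝ) T ×ˢ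
        (Set.univ : Set (EuclideanSpace ℝ (Fin n) × EuclideanSpace ℝ (Fin n)))) := by
  refine ⟨fun s hs x y => ?_, ?_⟩
  · obtain ⟨C, D, hD, hbound⟩ := hP1.exists_eventually_norm_le (x, y)
    exact summable_exp_neg_smul hD hbound.self_of_nhds hr hT hs
  · exact (continuousOn_tsum_exp_neg_smul (f := fun t (q : _ × _) => L t q.1 q.2) hr hT
      hP1.continuousOn_uncurry hP1.exists_eventually_norm_le).const_smul (1 - exp (-r * T))

/-- If `L` satisfies (P1), then `A₁(L)` is well defined (the series converges) and is
continuous on `[0,T] × ℝⁿ × ℝⁿ`. -/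
theorem A1_continuous_of_P1
    (r T : ℝ) (hr : 0 < r) (hT : 0 < T) (n : ℕ) (hn : 0 < n)
    (L : ℝ → EuclideanSpace ℝ (Fin n) → EuclideanSpace ℝ (Fin n) → ℝ)
    (hP1 : P1Prop L) :
    (∀ s ∈ Set.Icc (0:ℝ) T, ∀ x y : EuclideanSpace ℝ (Fin n),
      Summable fun k : ℕ => Real.exp (-(r * k * T)) • L (s + k * T) x y) ∧
    ContinuousOn
      (fun p : ℝ × EuclideanSpace ℝ (Fin n) × EuclideanSpace ℝ (Fin n) =>
        A1v r T L p.1 p.2.1 p.2.2)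
      (Set.Icc (0:ℝ) T ×ˢ
        (Set.univ : Set (EuclideanSpace ℝ (Fin n) × EuclideanSpace ℝ (Fin n)))) :=
  A1_continuous_of_P1_general r T hr hT n L hP1
end

section
/- Let r > 0, T > 0, n ∈ ℕ* and L ∈ C¹(ℝ₊ × ℝⁿ × ℝⁿ, ℝ). If L satisfies properties (P1) and (P2) and its differential DL satisfies property (P1), then A₁(L) ∈ C¹([0,T] × ℝⁿ × ℝⁿ, ℝ) and D(A₁(L)) = A₁(DL), i.e. the Fréchet differential of the averaged Lagrangian is the average of the differential of L. -/
open MeasureTheory Real Set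

/-- Property (P2), with respect to a given differential `Φ'`. -/
def P2Prop {G F : Type*} [NormedAddCommGroup G] [NormedSpace ℝ G]
    [NormedAddCommGroup F] [NormedSpace ℝ F]
    (Φ : ℝ → G → G → F) (Φ' : ℝ → G → G → (ℝ × G × G →L[ℝ] F)) : Prop :=
  ∀ (x y : G), ∀ ε : ℝ, 0 < ε → ∃ η : ℝ, 0 < η ∧
    ∀ t ∈ Set.Ici (0:ℝ), ∀ t₁ ∈ Set.Ici (0:ℝ), ∀ x₁ y₁ : G,
      |t - t₁| ≤ η → ‖x - x₁‖ ≤ η → ‖y - y₁‖ ≤ η →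
        ‖Φ t₁ x₁ y₁ - Φ t x y - Φ' t x y (t₁ - t, x₁ - x, y₁ - y)‖ ≤
          ε * (|t - t₁| + ‖x - x₁‖ + ‖y - y₁‖)

/-! The weights `(1 - ρ) ρ^k`, `ρ = e^{-rT}`, of `A₁` form a probability distribution on `ℕ`, so a
uniform bound on the terms of the series is inherited by `A₁`. (P1) gives at most linear growth in
`t`, hence summability, and since (P1) and (P2) are uniform in `t` they apply simultaneously to all
the shifted points `(s + kT, x, y)`: the first-order remainder of `A₁(L)` is the average of the
remainders of `L` at these points, each of them `o(‖(Δs, Δx, Δy)‖)` uniformly in `k`. -/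

theorem exp_neg_mul_natCast_mul (r T : ℝ) (k : ℕ) :
    exp (-(r * k * T)) = exp (-(r * T)) ^ k := by
  rw [← exp_nat_mul]; ring_nf

theorem hasSum_A1v_weights {r T : ℝ} (hr : 0 < r) (hT : 0 < T) :
    HasSum (fun k : ℕ => (1 - exp (-r * T)) * exp (-(r * k * T))) 1 := by
  have hρ : exp (-(r * T)) < 1 := exp_lt_one_iff.2 (by nlinarith)
  have h := (hasSum_geometric_of_lt_one (exp_nonneg _) hρ).mul_left (1 - exp (-(r * T)))
  rw [mul_inv_cancel₀ (sub_pos.2 hρ).ne'] at h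
  simpa only [neg_mul, exp_neg_mul_natCast_mul] using h

section Average

variable {F : Type*} [NormedAddCommGroup F] [NormedSpace ℝ F]

theorem norm_le_of_hasSum_A1v {r T c : ℝ} (hr : 0 < r) (hT : 0 < T) {a : ℕ → F} {S : F}
    (hS : HasSum (fun k : ℕ => (1 - exp (-r * T)) • exp (-(r * k * T)) • a k) S)
    (ha : ∀ k, ‖a k‖ ≤ c) : ‖S‖ ≤ c := by
  have hρ : exp (-(r * T)) < 1 := exp_lt_one_iff.2 (by nlinarith)
  have hw : 0 ≤ 1 - exp (-r * T) := by rw [neg_mul]; linarith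
  simpa using hS.norm_le_of_bounded ((hasSum_A1v_weights hr hT).mul_right c) fun k => by
    rw [norm_smul, norm_smul, norm_of_nonneg hw, norm_of_nonneg (exp_nonneg _), ← mul_assoc]
    exact mul_le_mul_of_nonneg_left (ha k) (mul_nonneg hw (exp_nonneg _))

theorem hasSum_A1v {G : Type*} {r T s : ℝ} {Φ : ℝ → G → G → F} {x y : G}
    (h : Summable fun k : ℕ => exp (-(r * k * T)) • Φ (s + k * T) x y) :
    HasSum (fun k : ℕ => (1 - exp (-r * T)) • exp (-(r * k * T)) • Φ (s + k * T) x y)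
      (A1v r T Φ s x y) :=
  h.hasSum.const_smul _

end Average

theorem norm_sub_apply_zero_le_div_add_one {F : Type*} [NormedAddCommGroup F] {f : ℝ → F}
    {δ : ℝ} (hδ : 0 < δ) (hf : ∀ t ≥ 0, ∀ t₁ ≥ 0, |t - t₁| ≤ δ → ‖f t - f t₁‖ ≤ 1)
    {t : ℝ} (ht : 0 ≤ t) : ‖f t - f 0‖ ≤ t / δ + 1 := by
  have chain : ∀ m : ℕ, ∀ t, 0 ≤ t → t ≤ m * δ → ‖f t - f 0‖ ≤ m := by
    intro m
    induction m with
    | zero =>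
      intro t ht ht'
      simp [le_antisymm (by simpa using ht') ht]
    | succ m ih =>
      intro t ht ht'
      rcases le_or_gt t δ with hle | hlt
      · have := hf t ht 0 le_rfl (by rwa [sub_zero, abs_of_nonneg ht])
        push_cast
        linarith [m.cast_nonneg (α := ℝ)]
      · calc ‖f t - f 0‖ ≤ ‖f t - f (t - δ)‖ + ‖f (t - δ) - f 0‖ :=
              norm_sub_le_norm_sub_add_norm_sub _ _ _
          _ ≤ 1 + m := add_le_add (hf t ht _ (by linarith) (by simp [abs_of_pos hδ]))
              (ih _ (by linarith) (by push_cast at ht'; linarith))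
          _ = _ := by push_cast; ring
  calc ‖f t - f 0‖ ≤ ⌈t / δ⌉₊ := chain _ t ht ((div_le_iff₀ hδ).1 (Nat.le_ceil _))
    _ ≤ t / δ + 1 := (Nat.ceil_lt_add_one (by positivity)).le

theorem abs_sub_le_norm_triple {G : Type*} [NormedAddCommGroup G] (t t₁ : ℝ) (x x₁ y y₁ : G) :
    |t - t₁| ≤ ‖((t₁ - t, x₁ - x, y₁ - y) : ℝ × G × G)‖ ∧
      ‖x - x₁‖ ≤ ‖((t₁ - t, x₁ - x, y₁ - y) : ℝ × G × G)‖ ∧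
      ‖y - y₁‖ ≤ ‖((t₁ - t, x₁ - x, y₁ - y) : ℝ × G × G)‖ := by
  refine ⟨?_, ?_, ?_⟩
  · rw [abs_sub_comm, ← Real.norm_eq_abs]; exact norm_fst_le (t₁ - t, x₁ - x, y₁ - y)
  · rw [norm_sub_rev]
    exact (norm_fst_le (x₁ - x, y₁ - y)).trans (norm_snd_le (t₁ - t, x₁ - x, y₁ - y))
  · rw [norm_sub_rev]
    exact (norm_snd_le (x₁ - x, y₁ - y)).trans (norm_snd_le (t₁ - t, x₁ - x, y₁ - y))

namespace P1Prop

variable {G F : Type*} [NormedAddCommGroup G] [NormedAddCommGroup F] {Φ : ℝ → G → G → F}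

theorem exists_norm_le_add_mul (h : P1Prop Φ) (x y : G) :
    ∃ A B : ℝ, ∀ t ≥ 0, ‖Φ t x y‖ ≤ A + B * t := by
  obtain ⟨δ, hδ, hδΦ⟩ := h x y 1 one_pos
  refine ⟨‖Φ 0 x y‖ + 1, δ⁻¹, fun t ht => ?_⟩
  have := norm_sub_apply_zero_le_div_add_one (f := (Φ · x y)) hδ
    (fun t ht t₁ ht₁ hδt => hδΦ t ht t₁ ht₁ x y hδt (by simp [hδ.le]) (by simp [hδ.le])) ht
  linarith [norm_le_norm_add_norm_sub' (Φ t x y) (Φ 0 x y), div_eq_inv_mul t δ]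

theorem summable_exp_smul [NormedSpace ℝ F] [CompleteSpace F] (h : P1Prop Φ) {r T : ℝ}
    (hr : 0 < r) (hT : 0 < T) {s : ℝ} (hs : 0 ≤ s) (x y : G) :
    Summable fun k : ℕ => exp (-(r * k * T)) • Φ (s + k * T) x y := by
  obtain ⟨A, B, hAB⟩ := h.exists_norm_le_add_mul x y
  set ρ := exp (-(r * T))
  have hρ : ‖ρ‖ < 1 := by
    rw [norm_of_nonneg (exp_nonneg _)]; exact exp_lt_one_iff.2 (by nlinarith)
  have hgeom : Summable fun k : ℕ => ρ ^ k * (A + B * s + B * T * k) := by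
    refine (((summable_geometric_of_norm_lt_one hρ).mul_left (A + B * s)).add
      ((summable_pow_mul_geometric_of_norm_lt_one 1 hρ).mul_left (B * T))).congr fun k => ?_
    ring
  refine hgeom.of_norm_bounded fun k => ?_
  rw [norm_smul, norm_of_nonneg (exp_nonneg _), exp_neg_mul_natCast_mul]
  calc ρ ^ k * ‖Φ (s + k * T) x y‖ ≤ ρ ^ k * (A + B * (s + k * T)) := by
        gcongr; exact hAB _ (by positivity)
    _ = ρ ^ k * (A + B * s + B * T * k) := by ring

theorem exists_norm_sub_le (h : P1Prop Φ) (x y : G) {ε : ℝ} (hε : 0 < ε) :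
    ∃ δ > 0, ∀ t ≥ 0, ∀ t₁ ≥ 0, ∀ x₁ y₁ : G,
      ‖((t₁ - t, x₁ - x, y₁ - y) : ℝ × G × G)‖ ≤ δ → ‖Φ t₁ x₁ y₁ - Φ t x y‖ ≤ ε := by
  obtain ⟨δ, hδ, hδΦ⟩ := h x y ε hε
  refine ⟨δ, hδ, fun t ht t₁ ht₁ x₁ y₁ hd => ?_⟩
  obtain ⟨h₁, h₂, h₃⟩ := abs_sub_le_norm_triple t t₁ x x₁ y y₁
  rw [norm_sub_rev]
  exact hδΦ t ht t₁ ht₁ x₁ y₁ (h₁.trans hd) (h₂.trans hd) (h₃.trans hd)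

theorem continuousWithinAt_A1v [NormedSpace ℝ F] [CompleteSpace F] (h : P1Prop Φ) {r T : ℝ}
    (hr : 0 < r) (hT : 0 < T) {p : ℝ × G × G} (hp : 0 ≤ p.1) :
    ContinuousWithinAt (fun q : ℝ × G × G => A1v r T Φ q.1 q.2.1 q.2.2) (Ici 0 ×ˢ univ) p := by
  obtain ⟨s, x, y⟩ := p
  rw [Metric.continuousWithinAt_iff]
  intro ε hε
  obtain ⟨δ, hδ, hδΦ⟩ := h.exists_norm_sub_le x y (half_pos hε)
  refine ⟨δ, hδ, ?_⟩
  rintro ⟨s₁, x₁, y₁⟩ ⟨hs₁, -⟩ hq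
  rw [dist_eq_norm] at hq ⊢
  have hsum := (hasSum_A1v (h.summable_exp_smul hr hT hs₁ x₁ y₁)).sub
    (hasSum_A1v (h.summable_exp_smul hr hT hp x y))
  simp only [← smul_sub] at hsum
  refine (norm_le_of_hasSum_A1v hr hT hsum fun k => ?_).trans_lt (half_lt_self hε)
  refine hδΦ _ (by positivity) _ (by simp only [mem_Ici] at hs₁; positivity) x₁ y₁ ?_
  rw [add_sub_add_right_eq_sub]
  exact hq.le

end P1Prop

namespace P2Prop

variable {G F : Type*} [NormedAddCommGroup G] [NormedSpace ℝ G] [NormedAddCommGroup F]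
  [NormedSpace ℝ F] {Φ : ℝ → G → G → F} {Φ' : ℝ → G → G → (ℝ × G × G →L[ℝ] F)}

theorem exists_norm_remainder_le (h : P2Prop Φ Φ') (x y : G) {ε : ℝ} (hε : 0 < ε) :
    ∃ η > 0, ∀ t ≥ 0, ∀ t₁ ≥ 0, ∀ x₁ y₁ : G,
      ‖((t₁ - t, x₁ - x, y₁ - y) : ℝ × G × G)‖ ≤ η →
        ‖Φ t₁ x₁ y₁ - Φ t x y - Φ' t x y (t₁ - t, x₁ - x, y₁ - y)‖ ≤
          ε * ‖((t₁ - t, x₁ - x, y₁ - y) : ℝ × G × G)‖ := by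
  obtain ⟨η, hη, hηΦ⟩ := h x y (ε / 3) (by positivity)
  refine ⟨η, hη, fun t ht t₁ ht₁ x₁ y₁ hd => ?_⟩
  obtain ⟨h₁, h₂, h₃⟩ := abs_sub_le_norm_triple t t₁ x x₁ y y₁
  calc _ ≤ ε / 3 * (|t - t₁| + ‖x - x₁‖ + ‖y - y₁‖) :=
        hηΦ t ht t₁ ht₁ x₁ y₁ (h₁.trans hd) (h₂.trans hd) (h₃.trans hd)
    _ ≤ ε / 3 * (3 * ‖((t₁ - t, x₁ - x, y₁ - y) : ℝ × G × G)‖) := by gcongr; linarith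
    _ = _ := by ring

theorem hasFDerivWithinAt_A1v [CompleteSpace F] (h : P2Prop Φ Φ') (hΦ : P1Prop Φ)
    (hΦ' : P1Prop Φ') {r T : ℝ} (hr : 0 < r) (hT : 0 < T) {p : ℝ × G × G} (hp : 0 ≤ p.1) :
    HasFDerivWithinAt (fun q : ℝ × G × G => A1v r T Φ q.1 q.2.1 q.2.2)
      (A1v r T Φ' p.1 p.2.1 p.2.2) (Ici 0 ×ˢ univ) p := by
  obtain ⟨s, x, y⟩ := p
  rw [hasFDerivWithinAt_iff_isLittleO, Asymptotics.isLittleO_iff]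
  intro c hc
  obtain ⟨η, hη, hηΦ⟩ := h.exists_norm_remainder_le x y hc
  filter_upwards [mem_nhdsWithin_of_mem_nhds (Metric.closedBall_mem_nhds (s, x, y) hη),
    self_mem_nhdsWithin] with q hq hqS
  obtain ⟨s₁, x₁, y₁⟩ := q
  obtain ⟨hs₁, -⟩ := hqS
  simp only [mem_Ici] at hs₁
  dsimp only at hp ⊢
  set v : ℝ × G × G := (s₁, x₁, y₁) - (s, x, y)
  rw [Metric.mem_closedBall, dist_eq_norm] at hq
  have hsum := ((hasSum_A1v (hΦ.summable_exp_smul hr hT hs₁ x₁ y₁)).sub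
    (hasSum_A1v (hΦ.summable_exp_smul hr hT hp x y))).sub
    ((hasSum_A1v (hΦ'.summable_exp_smul hr hT hp x y)).mapL (ContinuousLinearMap.apply ℝ F v))
  simp only [ContinuousLinearMap.apply_apply, smul_apply, ← smul_sub] at hsum
  refine norm_le_of_hasSum_A1v hr hT hsum fun k => ?_
  have hk := hηΦ (s + k * T) (by positivity) (s₁ + k * T) (by positivity) x₁ y₁
  rw [add_sub_add_right_eq_sub] at hk
  exact hk hq

end P2Prop

theorem A1_C1_of_P1_P2_general
    (r T : ℝ) (hr : 0 < r) (hT : 0 < T) (n : ℕ)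
    (L : ℝ → EuclideanSpace ℝ (Fin n) → EuclideanSpace ℝ (Fin n) → ℝ)
    (L' : ℝ → EuclideanSpace ℝ (Fin n) → EuclideanSpace ℝ (Fin n) →
      (ℝ × EuclideanSpace ℝ (Fin n) × EuclideanSpace ℝ (Fin n) →L[ℝ] ℝ))
    (hP1 : P1Prop L) (hP2 : P2Prop L L') (hP1' : P1Prop L') :
    -- `A₁(L)` is differentiable on `[0,T] × ℝⁿ × ℝⁿ` with differential `A₁(DL)` :
    (∀ p ∈ Set.Icc (0:ℝ) T ×ˢ
        (Set.univ : Set (EuclideanSpace ℝ (Fin n) × EuclideanSpace ℝ (Fin n))),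
      HasFDerivWithinAt
        (fun q : ℝ × EuclideanSpace ℝ (Fin n) × EuclideanSpace ℝ (Fin n) =>
          A1v r T L q.1 q.2.1 q.2.2)
        (A1v r T L' p.1 p.2.1 p.2.2)
        (Set.Icc (0:ℝ) T ×ˢ
          (Set.univ : Set (EuclideanSpace ℝ (Fin n) × EuclideanSpace ℝ (Fin n)))) p) ∧
    -- and `A₁(L)`, `A₁(DL)` are continuous there (so `A₁(L)` is `C¹`) :
    ContinuousOn
      (fun p : ℝ × EuclideanSpace ℝ (Fin n) × EuclideanSpace ℝ (Fin n) =>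
        A1v r T L p.1 p.2.1 p.2.2)
      (Set.Icc (0:ℝ) T ×ˢ
        (Set.univ : Set (EuclideanSpace ℝ (Fin n) × EuclideanSpace ℝ (Fin n)))) ∧
    ContinuousOn
      (fun p : ℝ × EuclideanSpace ℝ (Fin n) × EuclideanSpace ℝ (Fin n) =>
        A1v r T L' p.1 p.2.1 p.2.2)
      (Set.Icc (0:ℝ) T ×ˢ
        (Set.univ : Set (EuclideanSpace ℝ (Fin n) × EuclideanSpace ℝ (Fin n)))) := by
  have hsub : Icc (0 : ℝ) T ×ˢ (univ : Set (EuclideanSpace ℝ (Fin n) × EuclideanSpace ℝ (Fin n)))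
      ⊆ Ici 0 ×ˢ univ :=
    prod_mono Icc_subset_Ici_self subset_rfl
  exact ⟨fun p hp => (hP2.hasFDerivWithinAt_A1v hP1 hP1' hr hT hp.1.1).mono hsub,
    fun p hp => (hP1.continuousWithinAt_A1v hr hT hp.1.1).mono hsub,
    fun p hp => (hP1'.continuousWithinAt_A1v hr hT hp.1.1).mono hsub⟩

/-- If `L ∈ C¹(ℝ₊ × ℝⁿ × ℝⁿ)` (with differential `L'`) satisfies (P1) and (P2) and `DL = L'`
satisfies (P1), then `A₁(L)` is `C¹` on `[0,T] × ℝⁿ × ℝⁿ` and `D(A₁(L)) = A₁(DL)`. -/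
theorem A1_C1_of_P1_P2
    (r T : ℝ) (hr : 0 < r) (hT : 0 < T) (n : ℕ) (hn : 0 < n)
    (L : ℝ → EuclideanSpace ℝ (Fin n) → EuclideanSpace ℝ (Fin n) → ℝ)
    (L' : ℝ → EuclideanSpace ℝ (Fin n) → EuclideanSpace ℝ (Fin n) →
      (ℝ × EuclideanSpace ℝ (Fin n) × EuclideanSpace ℝ (Fin n) →L[ℝ] ℝ))
    -- `L ∈ C¹(ℝ₊ × ℝⁿ × ℝⁿ, ℝ)` with differential `L'` :
    (hC1 : ∀ t ∈ Set.Ici (0:ℝ), ∀ x y : EuclideanSpace ℝ (Fin n),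
      HasFDerivWithinAt
        (fun p : ℝ × EuclideanSpace ℝ (Fin n) × EuclideanSpace ℝ (Fin n) => L p.1 p.2.1 p.2.2)
        (L' t x y)
        (Set.Ici (0:ℝ) ×ˢ
          (Set.univ : Set (EuclideanSpace ℝ (Fin n) × EuclideanSpace ℝ (Fin n)))) (t, x, y))
    (hDLcont : ContinuousOn
      (fun p : ℝ × EuclideanSpace ℝ (Fin n) × EuclideanSpace ℝ (Fin n) => L' p.1 p.2.1 p.2.2)
      (Set.Ici (0:ℝ) ×ˢ
        (Set.univ : Set (EuclideanSpace ℝ (Fin n) × EuclideanSpace ℝ (Fin n)))))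
    (hP1 : P1Prop L) (hP2 : P2Prop L L') (hP1' : P1Prop L') :
    -- `A₁(L)` is differentiable on `[0,T] × ℝⁿ × ℝⁿ` with differential `A₁(DL)` :
    (∀ p ∈ Set.Icc (0:ℝ) T ×ˢ
        (Set.univ : Set (EuclideanSpace ℝ (Fin n) × EuclideanSpace ℝ (Fin n))),
      HasFDerivWithinAt
        (fun q : ℝ × EuclideanSpace ℝ (Fin n) × EuclideanSpace ℝ (Fin n) =>
          A1v r T L q.1 q.2.1 q.2.2)
        (A1v r T L' p.1 p.2.1 p.2.2)
        (Set.Icc (0:ℝ) T ×ˢ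
          (Set.univ : Set (EuclideanSpace ℝ (Fin n) × EuclideanSpace ℝ (Fin n)))) p) ∧
    -- and `A₁(L)`, `A₁(DL)` are continuous there (so `A₁(L)` is `C¹`) :
    ContinuousOn
      (fun p : ℝ × EuclideanSpace ℝ (Fin n) × EuclideanSpace ℝ (Fin n) =>
        A1v r T L p.1 p.2.1 p.2.2)
      (Set.Icc (0:ℝ) T ×ˢ
        (Set.univ : Set (EuclideanSpace ℝ (Fin n) × EuclideanSpace ℝ (Fin n)))) ∧
    ContinuousOn
      (fun p : ℝ × EuclideanSpace ℝ (Fin n) × EuclideanSpace ℝ (Fin n) =>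
        A1v r T L' p.1 p.2.1 p.2.2)
      (Set.Icc (0:ℝ) T ×ˢ
        (Set.univ : Set (EuclideanSpace ℝ (Fin n) × EuclideanSpace ℝ (Fin n)))) :=
  A1_C1_of_P1_P2_general r T hr hT n L L' hP1 hP2 hP1'
end
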